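/- Let k be a field of characteristic ≠ 2, m ≥ 1, and write n = 2m+1. Let c₀ = (1,0,…,0) ∈ k^{2m} and let X₁ be a 2m×2m matrix over k satisfying: (i) c₀ X₁ = 0 (row condition coming from X₃ X₁ = 0 with X₃ = c₀), and (ii) X₁ + σ(X₁) = -J c₀^t c₀, where σ(B) = J B^t J and J = J_{2m}. Then X₁ has the block form (block sizes 1, 2m-2, 1): first row zero; middle rows equal to (σ(Y₂)^t-column, Y₁, 0); last row (1/2, Y₂, 0); where Y₁ is a (2m-2)×(2m-2) matrix with Y₁ + σ'(Y₁) = 0 (σ' the analogous involution in size 2m-2) and Y₂ an arbitrary row vector of length 2m-2. -/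

import Mathlib

/-!
Write `Jstd i j = ε i` if `j = rev i` and `0` otherwise, where `rev i = N - 1 - i` and `ε` is `1`
on the first half of the indices and `-1` on the second. Since `N` is even, `ε (rev i) = -ε i`,
so `σ(B) i j = -ε i ε j B (rev j) (rev i)` and the hypothesis on `X₁` becomes the entrywise
relation `X i j - ε i ε j X (rev j) (rev i) = [i = last ∧ j = first]`. The row condition kills
the first row; the relation moves it to the last column, gives `2 X last first = 1`, ties the
inner part of the first column to the inner part of the last row, and on the inner block it is
`Y₁ + σ'(Y₁) = 0`, because the shift `i ↦ i + 1` commutes with `rev` and preserves `ε`.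
-/

open Matrix

/-- The standard antisymmetric matrix `J_N` (for even `N`), with `J² = -I`. -/
def Jstd (k : Type*) [Field k] (N : ℕ) : Matrix (Fin N) (Fin N) k :=
  Matrix.of fun i j =>
    if (i : ℕ) + (j : ℕ) = N - 1 then (if (i : ℕ) < N / 2 then 1 else -1) else 0

def Jsign (k : Type*) [Field k] {N : ℕ} (i : Fin N) : k := if (i : ℕ) < N / 2 then 1 else -1

lemma Jstd_apply (k : Type*) [Field k] (N : ℕ) (i j : Fin N) :
    Jstd k N i j = if i.rev = j then Jsign k i else 0 := by
  simp only [Jstd, of_apply, Jsign, Fin.ext_iff, Fin.val_rev]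
  congr 1
  apply propext
  omega

lemma Jsign_rev (k : Type*) [Field k] {N : ℕ} (hN : Even N) (i : Fin N) :
    Jsign k i.rev = -Jsign k i := by
  obtain ⟨r, rfl⟩ := hN
  have := i.isLt
  unfold Jsign
  rw [Fin.val_rev]
  split_ifs <;> first | omega | norm_num

lemma Jstd_mulVec_apply (k : Type*) [Field k] (N : ℕ) (v : Fin N → k) (i : Fin N) :
    (Jstd k N *ᵥ v) i = Jsign k i * v i.rev := by
  simp [mulVec, dotProduct, Jstd_apply, ite_mul]

lemma Jstd_mul_transpose_mul_apply (k : Type*) [Field k] (N : ℕ) (A : Matrix (Fin N) (Fin N) k)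
    (i j : Fin N) :
    (Jstd k N * Aᵀ * Jstd k N) i j = Jsign k i * Jsign k j.rev * A j.rev i.rev := by
  simp_rw [mul_apply, Jstd_apply, transpose_apply, ite_mul, zero_mul, Finset.sum_ite_eq,
    mul_ite, mul_zero, Fin.rev_eq_iff, Finset.sum_ite_eq', Finset.mem_univ, if_true]
  ring

def innerIdx {n N : ℕ} (h : n + 2 = N) (i : Fin n) : Fin N := ⟨i + 1, by omega⟩

lemma rev_innerIdx {n N : ℕ} (h : n + 2 = N) (i : Fin n) :
    (innerIdx h i).rev = innerIdx h i.rev := by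
  ext
  simp only [innerIdx, Fin.val_rev]
  omega

lemma Jsign_innerIdx (k : Type*) [Field k] {n N : ℕ} (h : n + 2 = N) (i : Fin n) :
    Jsign k (innerIdx h i) = Jsign k i := by
  simp only [Jsign, innerIdx]
  congr 1
  exact propext (by omega)

section Fiber

variable {k : Type*} [Field k] {m : ℕ} {X : Matrix (Fin (2 * m)) (Fin (2 * m)) k}

lemma entry_sub_sign_mul_entry_rev
    (hsym : X + Jstd k (2 * m) * Xᵀ * Jstd k (2 * m) = -(Jstd k (2 * m) *
      vecMulVec (fun j : Fin (2 * m) => if (j : ℕ) = 0 then (1 : k) else 0)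
        (fun j : Fin (2 * m) => if (j : ℕ) = 0 then (1 : k) else 0)))
    (i j : Fin (2 * m)) :
    X i j - Jsign k i * Jsign k j * X j.rev i.rev
      = if (i : ℕ) = 2 * m - 1 ∧ (j : ℕ) = 0 then 1 else 0 := by
  have h := congrFun₂ hsym i j
  rw [Matrix.add_apply, Jstd_mul_transpose_mul_apply, Jsign_rev k (even_two_mul m),
    Matrix.neg_apply, mul_vecMulVec, vecMulVec_apply, Jstd_mulVec_apply, Fin.val_rev] at h
  have := i.isLt
  unfold Jsign at h ⊢
  split_ifs at h ⊢ <;> first | omega | linear_combination h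

lemma entry_eq_zero_of_vecMul_eq_zero
    (hrow : vecMul (fun j : Fin (2 * m) => if (j : ℕ) = 0 then (1 : k) else 0) X = 0)
    (i j : Fin (2 * m)) (hi : (i : ℕ) = 0) : X i j = 0 := by
  have hc : (fun j : Fin (2 * m) => if (j : ℕ) = 0 then (1 : k) else 0) = Pi.single i 1 := by
    ext j
    simp [Pi.single_apply, Fin.ext_iff, hi]
  simpa [hc] using congrFun hrow j

lemma entry_eq_zero_of_col_eq_last
    (hrow : vecMul (fun j : Fin (2 * m) => if (j : ℕ) = 0 then (1 : k) else 0) X = 0)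
    (hE : ∀ i j, X i j - Jsign k i * Jsign k j * X j.rev i.rev
      = if (i : ℕ) = 2 * m - 1 ∧ (j : ℕ) = 0 then 1 else 0)
    (i j : Fin (2 * m)) (hj : (j : ℕ) = 2 * m - 1) : X i j = 0 := by
  have h := hE i j
  rw [entry_eq_zero_of_vecMul_eq_zero hrow j.rev i.rev (by rw [Fin.val_rev]; omega),
    if_neg (by omega)] at h
  linear_combination h

lemma entry_last_first_eq_half (hchar : (2 : k) ≠ 0)
    (hE : ∀ i j, X i j - Jsign k i * Jsign k j * X j.rev i.rev
      = if (i : ℕ) = 2 * m - 1 ∧ (j : ℕ) = 0 then 1 else 0)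
    (i j : Fin (2 * m)) (hi : (i : ℕ) = 2 * m - 1) (hj : (j : ℕ) = 0) : X i j = 1 / 2 := by
  have h := hE i j
  rw [show j.rev = i by ext; rw [Fin.val_rev]; omega,
    show i.rev = j by ext; rw [Fin.val_rev]; omega,
    show Jsign k i = -1 from if_neg (by omega), show Jsign k j = 1 from if_pos (by omega),
    if_pos ⟨hi, hj⟩] at h
  rw [eq_div_iff hchar]
  linear_combination h

lemma entry_inner_first_eq_Jstd_mulVec {n : ℕ} (hn : n + 2 = 2 * m)
    (hE : ∀ i j, X i j - Jsign k i * Jsign k j * X j.rev i.rev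
      = if (i : ℕ) = 2 * m - 1 ∧ (j : ℕ) = 0 then 1 else 0)
    (i j : Fin (2 * m)) (hi : (i : ℕ) = 2 * m - 1) (hj : (j : ℕ) = 0) (a : Fin n) :
    X (innerIdx hn a) j = (Jstd k n *ᵥ fun b => X i (innerIdx hn b)) a := by
  have h := hE (innerIdx hn a) j
  rw [show j.rev = i by ext; rw [Fin.val_rev]; omega, rev_innerIdx, Jsign_innerIdx,
    show Jsign k j = 1 from if_pos (by omega), if_neg (by simp [innerIdx]; omega)] at h
  rw [Jstd_mulVec_apply]
  linear_combination h

lemma inner_block_add_sigma_eq_zero {n : ℕ} (hn : n + 2 = 2 * m)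
    (hE : ∀ i j, X i j - Jsign k i * Jsign k j * X j.rev i.rev
      = if (i : ℕ) = 2 * m - 1 ∧ (j : ℕ) = 0 then 1 else 0) :
    X.submatrix (innerIdx hn) (innerIdx hn)
      + Jstd k n * (X.submatrix (innerIdx hn) (innerIdx hn))ᵀ * Jstd k n = 0 := by
  ext a b
  have h := hE (innerIdx hn a) (innerIdx hn b)
  rw [rev_innerIdx, rev_innerIdx, Jsign_innerIdx, Jsign_innerIdx,
    if_neg (by simp [innerIdx])] at h
  rw [Matrix.add_apply, Jstd_mul_transpose_mul_apply, Jsign_rev k ⟨m - 1, by omega⟩]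
  simp only [submatrix_apply, Matrix.zero_apply]
  linear_combination h

end Fiber

/-- Block description of the matrices `X₁` lying in the fiber over `c₀`: if
`c₀ X₁ = 0` and `X₁ + σ(X₁) = -J c₀ᵀ c₀` (with `σ(B) = J Bᵀ J`), then `X₁` has the
block form with first row zero, last column zero, lower-left entry `1/2`, last row
middle part an arbitrary vector `Y₂`, first column middle part `σ(Y₂) = J_{2m-2} Y₂ᵀ`,
and middle block `Y₁` satisfying `Y₁ + σ'(Y₁) = 0`. -/
theorem stmt11 (k : Type*) [Field k] (hchar : (2 : k) ≠ 0)
    (m : ℕ) (hm : 1 ≤ m)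
    (X₁ : Matrix (Fin (2 * m)) (Fin (2 * m)) k)
    (c₀ : Fin (2 * m) → k) (hc₀ : c₀ = fun j : Fin (2 * m) => if (j : ℕ) = 0 then (1 : k) else 0)
    (hrow : Matrix.vecMul c₀ X₁ = 0)
    (hsym : X₁ + Jstd k (2 * m) * X₁ᵀ * Jstd k (2 * m)
      = -(Jstd k (2 * m) * Matrix.vecMulVec c₀ c₀)) :
    ∃ (Y₁ : Matrix (Fin (2 * m - 2)) (Fin (2 * m - 2)) k) (Y₂ : Fin (2 * m - 2) → k),
      Y₁ + Jstd k (2 * m - 2) * Y₁ᵀ * Jstd k (2 * m - 2) = 0 ∧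
      (∀ j, X₁ ⟨0, by omega⟩ j = 0) ∧
      (∀ i, X₁ i ⟨2 * m - 1, by omega⟩ = 0) ∧
      X₁ ⟨2 * m - 1, by omega⟩ ⟨0, by omega⟩ = 1 / 2 ∧
      (∀ j : Fin (2 * m - 2),
        X₁ ⟨2 * m - 1, by omega⟩ ⟨(j : ℕ) + 1, by have := j.isLt; omega⟩ = Y₂ j) ∧
      (∀ i : Fin (2 * m - 2),
        X₁ ⟨(i : ℕ) + 1, by have := i.isLt; omega⟩ ⟨0, by omega⟩
          = Matrix.mulVec (Jstd k (2 * m - 2)) Y₂ i) ∧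
      (∀ i j : Fin (2 * m - 2),
        X₁ ⟨(i : ℕ) + 1, by have := i.isLt; omega⟩ ⟨(j : ℕ) + 1, by have := j.isLt; omega⟩
          = Y₁ i j) := by
  subst hc₀
  have hn : 2 * m - 2 + 2 = 2 * m := by omega
  have hE := entry_sub_sign_mul_entry_rev hsym
  exact ⟨X₁.submatrix (innerIdx hn) (innerIdx hn),
    fun b => X₁ ⟨2 * m - 1, by omega⟩ (innerIdx hn b),
    inner_block_add_sigma_eq_zero hn hE,
    fun j => entry_eq_zero_of_vecMul_eq_zero hrow _ j rfl,
    fun i => entry_eq_zero_of_col_eq_last hrow hE i _ rfl,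
    entry_last_first_eq_half hchar hE _ _ rfl rfl,
    fun _ => rfl,
    entry_inner_first_eq_Jstd_mulVec hn hE ⟨2 * m - 1, by omega⟩ ⟨0, by omega⟩ rfl rfl,
    fun _ _ => rfl⟩
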